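/- For 0 < q < 1 and |z| < 1/(1-q), the q-exponential e_q(z) = ∑_{n=0}^∞ z^n/[n]_q! satisfies e_q(z) = 1/∏_{i=0}^∞ (1 - (1-q) q^i z). -/

import Mathlib

noncomputable def qFactorial (q : ℝ) (n : ℕ) : ℝ :=
  ∏ k ∈ Finset.range n, (1 - q ^ (k + 1)) / (1 - q)

/-- `e_q(z) = ∑ z^n / [n]_q!`. -/
noncomputable def qExp (q : ℝ) (z : ℝ) : ℝ :=
  ∑' n : ℕ, z ^ n / qFactorial q n

/-!
Summing the identity `w^(n+1)/[n+1]! - (qw)^(n+1)/[n+1]! = (1-q) w · w^n/[n]!` over `n` gives the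
functional equation `(1 - (1-q) w) e_q(w) = e_q(qw)`. Iterating it,
`∏_{i<n} (1 - (1-q) q^i z) · e_q(z) = e_q(q^n z)`, and as `n → ∞` the right side tends to
`e_q(0) = 1` by continuity of `e_q` at `0` (dominated convergence for series), while the left
side tends to `∏' · e_q(z)`.
-/

open Filter Topology

section

variable {q : ℝ}

lemma qFactorial_zero : qFactorial q 0 = 1 := Finset.prod_range_zero _

lemma qFactorial_succ (n : ℕ) :
    qFactorial q (n + 1) = qFactorial q n * ((1 - q ^ (n + 1)) / (1 - q)) :=
  Finset.prod_range_succ _ n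

lemma qExp_zero : qExp q 0 = 1 := by
  rw [qExp, tsum_eq_single 0 fun n hn => by simp [zero_pow hn]]
  simp [qFactorial_zero]

variable (hq : |q| < 1)
include hq

lemma one_sub_pow_pos {n : ℕ} (hn : n ≠ 0) : 0 < 1 - q ^ n :=
  sub_pos.2 (lt_of_abs_lt (by rw [abs_pow]; exact pow_lt_one₀ (abs_nonneg q) hq hn))

lemma qFactorial_pos (n : ℕ) : 0 < qFactorial q n :=
  Finset.prod_pos fun k _ =>
    div_pos (one_sub_pow_pos hq k.succ_ne_zero) (sub_pos.2 (lt_of_abs_lt hq))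

lemma norm_pow_div_qFactorial_succ (w : ℝ) (n : ℕ) :
    ‖w ^ (n + 1) / qFactorial q (n + 1)‖
      = (1 - q) * |w| / (1 - q ^ (n + 1)) * ‖w ^ n / qFactorial q n‖ := by
  have h1q : 0 < 1 - q := sub_pos.2 (lt_of_abs_lt hq)
  have h1qn := one_sub_pow_pos hq n.succ_ne_zero
  have hfac := qFactorial_pos hq n
  rw [Real.norm_eq_abs, Real.norm_eq_abs, abs_div, abs_div, abs_pow, abs_pow, qFactorial_succ,
    abs_of_pos hfac, abs_of_pos (mul_pos hfac (div_pos h1qn h1q))]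
  field_simp
  ring

lemma summable_pow_div_qFactorial {w : ℝ} (hw : |w| < 1 / (1 - q)) :
    Summable fun n => w ^ n / qFactorial q n := by
  have hw' : (1 - q) * |w| < 1 := by
    rwa [lt_div_iff₀ (sub_pos.2 (lt_of_abs_lt hq)), mul_comm] at hw
  obtain ⟨r, hwr, hr1⟩ := exists_between hw'
  have hratio : Tendsto (fun n : ℕ => (1 - q) * |w| / (1 - q ^ (n + 1))) atTop
      (𝓝 ((1 - q) * |w|)) := by
    have hpow := (tendsto_pow_atTop_nhds_zero_of_abs_lt_one hq).comp (tendsto_add_atTop_nat 1)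
    have hden : Tendsto (fun n : ℕ => 1 - q ^ (n + 1)) atTop (𝓝 1) := by
      simpa using (tendsto_const_nhds (x := (1 : ℝ))).sub hpow
    simpa only [div_one, Pi.div_def] using tendsto_const_nhds.div hden one_ne_zero
  refine summable_of_ratio_norm_eventually_le hr1 ?_
  filter_upwards [hratio.eventually (eventually_le_nhds hwr)] with n hn
  rw [norm_pow_div_qFactorial_succ hq]
  exact mul_le_mul_of_nonneg_right hn (norm_nonneg _)

lemma pow_succ_div_qFactorial_sub (w : ℝ) (n : ℕ) :
    w ^ (n + 1) / qFactorial q (n + 1) - (q * w) ^ (n + 1) / qFactorial q (n + 1)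
      = (1 - q) * w * (w ^ n / qFactorial q n) := by
  have h1q : 0 < 1 - q := sub_pos.2 (lt_of_abs_lt hq)
  have h1qn := one_sub_pow_pos hq n.succ_ne_zero
  have hfac := qFactorial_pos hq n
  rw [qFactorial_succ, mul_pow]
  field_simp
  ring

lemma one_sub_mul_mul_qExp {w : ℝ} (hw : |w| < 1 / (1 - q)) :
    (1 - (1 - q) * w) * qExp q w = qExp q (q * w) := by
  have hqw : |q * w| < 1 / (1 - q) := by
    rw [abs_mul]
    exact (mul_le_of_le_one_left (abs_nonneg w) hq.le).trans_lt hw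
  have hdiff := (summable_pow_div_qFactorial hq hw).sub (summable_pow_div_qFactorial hq hqw)
  have : qExp q w - qExp q (q * w) = (1 - q) * w * qExp q w := by
    rw [qExp, qExp, ← (summable_pow_div_qFactorial hq hw).tsum_sub
      (summable_pow_div_qFactorial hq hqw), hdiff.tsum_eq_zero_add]
    simp only [pow_succ_div_qFactorial_sub hq, tsum_mul_left]
    simp [qFactorial_zero]
  linear_combination this

lemma prod_mul_qExp {z : ℝ} (hz : |z| < 1 / (1 - q)) (n : ℕ) :
    (∏ i ∈ Finset.range n, (1 - (1 - q) * q ^ i * z)) * qExp q z = qExp q (q ^ n * z) := by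
  induction n with
  | zero => simp
  | succ n ih =>
    have hqz : |q ^ n * z| < 1 / (1 - q) := by
      rw [abs_mul, abs_pow]
      exact (mul_le_of_le_one_left (abs_nonneg z) (pow_le_one₀ (abs_nonneg q) hq.le)).trans_lt hz
    rw [Finset.prod_range_succ, pow_succ', mul_assoc q, ← one_sub_mul_mul_qExp hq hqz, ← ih]
    ring

lemma continuousAt_qExp_zero : ContinuousAt (qExp q) 0 := by
  have hhalf : |(1 / 2 : ℝ)| < 1 / (1 - q) := by
    rw [lt_div_iff₀ (sub_pos.2 (lt_of_abs_lt hq))]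
    norm_num
    linarith [neg_abs_le q]
  refine tendsto_tsum_of_dominated_convergence (summable_pow_div_qFactorial hq hhalf)
    (fun k => ((continuous_pow k).div_const _).continuousAt) ?_
  filter_upwards [Metric.closedBall_mem_nhds (0 : ℝ) one_half_pos] with w hw k
  rw [mem_closedBall_zero_iff, Real.norm_eq_abs] at hw
  rw [Real.norm_eq_abs, abs_div, abs_pow, abs_of_pos (qFactorial_pos hq k)]
  gcongr
  exact (qFactorial_pos hq k).le

lemma multipliable_one_sub_mul_pow (c : ℝ) : Multipliable fun i : ℕ => 1 - c * q ^ i := by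
  simpa [sub_eq_add_neg] using
    Real.multipliable_one_add_of_summable ((summable_geometric_of_abs_lt_one hq).mul_left (-c))

end

theorem qExp_eq_inv_tprod (q : ℝ) (hq0 : 0 < q) (hq1 : q < 1) (z : ℝ)
    (hz : |z| < 1 / (1 - q)) :
    qExp q z = (∏' i : ℕ, (1 - (1 - q) * q ^ i * z))⁻¹ := by
  have hq : |q| < 1 := abs_lt.2 ⟨by linarith, hq1⟩
  have hmult : Multipliable fun i : ℕ => 1 - (1 - q) * q ^ i * z := by
    simpa only [mul_right_comm] using multipliable_one_sub_mul_pow hq ((1 - q) * z)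
  have hlim : Tendsto (fun n => qExp q (q ^ n * z)) atTop (𝓝 1) := by
    rw [← qExp_zero (q := q)]
    refine (continuousAt_qExp_zero hq).tendsto.comp ?_
    simpa using (tendsto_pow_atTop_nhds_zero_of_abs_lt_one hq).mul_const z
  have hone : (∏' i : ℕ, (1 - (1 - q) * q ^ i * z)) * qExp q z = 1 :=
    tendsto_nhds_unique (hmult.tendsto_prod_tprod_nat.mul_const _)
      (by simpa only [prod_mul_qExp hq hz] using hlim)
  exact eq_inv_of_mul_eq_one_left (by rwa [mul_comm] at hone)
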